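/- Let M = {E_m}_{m∈𝒳} be a quantum instrument on a finite-dimensional Hilbert space Q and s = {p(x), ρ_x}_{x∈X} an input ensemble. Then the entropy defect of the ensemble output by the channelized instrument decomposes as χ(M(s)) = I(X:𝒳) + Σ_m p(m) χ(s̄_m), where I(X:𝒳) is the classical mutual information between the input letter and the measurement outcome and s̄_m is the conditional output ensemble given outcome m. -/

import Mathlib

open Matrix
open scoped BigOperators ComplexOrder Classical

noncomputable section

namespace QID

variable {Q Q' R A X O B : Type*}

/-- The rank-one projector `|ψ⟩⟨ψ|`. -/
def pureState (ψ : Q → ℂ) : Matrix Q Q ℂ :=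
  Matrix.vecMulVec ψ (star ψ)

/-- A density matrix: positive semidefinite with unit trace. -/
def IsDensity [Fintype Q] (ρ : Matrix Q Q ℂ) : Prop :=
  ρ.PosSemidef ∧ ρ.trace = 1

/-- Square root of a positive semidefinite matrix (junk value `0` otherwise). -/
def sqrtPSD [Fintype Q] [DecidableEq Q] (M : Matrix Q Q ℂ) : Matrix Q Q ℂ :=
  if h : M.PosSemidef then
    (h.1.eigenvectorUnitary : Matrix Q Q ℂ) * diagonal ((↑) ∘ Real.sqrt ∘ h.1.eigenvalues) *
      (star h.1.eigenvectorUnitary : Matrix Q Q ℂ) else 0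

/-- The trace norm `‖M‖₁ = Tr √(MᴴM)`. -/
def traceNorm [Fintype Q] [DecidableEq Q] (M : Matrix Q Q ℂ) : ℝ :=
  (sqrtPSD (Mᴴ * M)).trace.re

/-- The fidelity `F(ρ,σ) = (Tr|√ρ√σ|)²`. -/
def fidelity [Fintype Q] [DecidableEq Q] (ρ σ : Matrix Q Q ℂ) : ℝ :=
  (traceNorm (sqrtPSD ρ * sqrtPSD σ)) ^ 2

/-- The von Neumann entropy `S(ρ) = -Tr[ρ log₂ ρ]` (base two), computed through
the eigenvalues of `ρ`; junk value `0` if `ρ` is not Hermitian. -/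
def entropy [Fintype Q] [DecidableEq Q] (ρ : Matrix Q Q ℂ) : ℝ :=
  if h : ρ.IsHermitian then (∑ i, Real.negMulLog (h.eigenvalues i)) / Real.log 2 else 0

/-- The entropy defect (Holevo quantity) `χ(s) = S(ρ_s) - ∑ₓ p(x) S(ρₓ)` of an ensemble. -/
def entropyDefect [Fintype Q] [DecidableEq Q] [Fintype X]
    (p : X → ℝ) (ρ : X → Matrix Q Q ℂ) : ℝ :=
  entropy (∑ x, (p x : ℂ) • ρ x) - ∑ x, p x * entropy (ρ x)

/-- The action of `id_R ⊗ Φ` on a bipartite matrix. -/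
def idTensor (Φ : Matrix Q Q ℂ →ₗ[ℂ] Matrix Q' Q' ℂ)
    (M : Matrix (R × Q) (R × Q) ℂ) : Matrix (R × Q') (R × Q') ℂ :=
  fun p q => Φ (Matrix.of fun a b => M (p.1, a) (q.1, b)) p.2 q.2

/-- Complete positivity: every ampliation `id_{Fin k} ⊗ Φ` preserves positive semidefiniteness. -/
def IsCompletelyPositive [Fintype Q] [Fintype Q']
    (Φ : Matrix Q Q ℂ →ₗ[ℂ] Matrix Q' Q' ℂ) : Prop :=
  ∀ (k : ℕ) (M : Matrix (Fin k × Q) (Fin k × Q) ℂ),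
    M.PosSemidef → (idTensor Φ M).PosSemidef

def IsTracePreserving [Fintype Q] [Fintype Q']
    (Φ : Matrix Q Q ℂ →ₗ[ℂ] Matrix Q' Q' ℂ) : Prop :=
  ∀ M : Matrix Q Q ℂ, (Φ M).trace = M.trace

/-- A channel: a completely positive trace-preserving linear map. -/
def IsChannel [Fintype Q] [Fintype Q']
    (Φ : Matrix Q Q ℂ →ₗ[ℂ] Matrix Q' Q' ℂ) : Prop :=
  IsCompletelyPositive Φ ∧ IsTracePreserving Φ

/-- A quantum instrument: a family of completely positive maps summing up to a
trace-preserving map. -/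
def IsInstrument [Fintype Q] [Fintype Q'] [Fintype O]
    (E : O → (Matrix Q Q ℂ →ₗ[ℂ] Matrix Q' Q' ℂ)) : Prop :=
  (∀ m, IsCompletelyPositive (E m)) ∧
    ∀ M : Matrix Q Q ℂ, (∑ m, E m M).trace = M.trace

/-- Partial trace over the first tensor factor. -/
def ptraceL [Fintype R] (M : Matrix (R × Q) (R × Q) ℂ) : Matrix Q Q ℂ :=
  fun a b => ∑ i, M (i, a) (i, b)

/-- Partial trace over the second tensor factor. -/
def ptraceRt [Fintype Q] (M : Matrix (R × Q) (R × Q) ℂ) : Matrix R R ℂ :=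
  fun i j => ∑ a, M (i, a) (j, a)

/-- `Ψ` (a vector on `R × Q`, reference first) purifies the state `ρ` on `Q`. -/
def IsPurification [Fintype R] (ρ : Matrix Q Q ℂ) (Ψ : R × Q → ℂ) : Prop :=
  ptraceL (pureState Ψ) = ρ

/-- The channelized instrument `ρ ↦ ∑ₘ Eₘ(ρ) ⊗ |m⟩⟨m|`, acting `Q → Q' ⊗ 𝒳`. -/
def instrApply [DecidableEq O] (E : O → (Matrix Q Q ℂ →ₗ[ℂ] Matrix Q' Q' ℂ))
    (ρ : Matrix Q Q ℂ) : Matrix (Q' × O) (Q' × O) ℂ :=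
  fun p q => if p.2 = q.2 then E p.2 ρ p.1 q.1 else 0

/-- The action of `id_R ⊗ M` for the channelized instrument `M` on a bipartite matrix. -/
def instrApplyRef [DecidableEq O] (E : O → (Matrix Q Q ℂ →ₗ[ℂ] Matrix Q' Q' ℂ))
    (M : Matrix (R × Q) (R × Q) ℂ) : Matrix (R × Q' × O) (R × Q' × O) ℂ :=
  fun p q => if p.2.2 = q.2.2 then
    E p.2.2 (Matrix.of fun a b => M (p.1, a) (q.1, b)) p.2.1 q.2.1 else 0

/-- The coherent information `I_c^{R→B}(ρ^{RB}) = S(ρ^B) - S(ρ^{RB})`. -/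
def cohInfo [Fintype R] [DecidableEq R] [Fintype B] [DecidableEq B]
    (M : Matrix (R × B) (R × B) ℂ) : ℝ :=
  entropy (ptraceL M) - entropy M

/-- The quantum disturbance `δ(ρ,M) = S(ρ) - I_c^{R→Q'𝒳}((id_R ⊗ M)(Ψ))` of an
instrument, w.r.t. a purification `Ψ` of `ρ`. -/
def qDisturbance [Fintype Q] [DecidableEq Q] [Fintype Q'] [DecidableEq Q']
    [Fintype R] [DecidableEq R] [Fintype O] [DecidableEq O]
    (ρ : Matrix Q Q ℂ) (E : O → (Matrix Q Q ℂ →ₗ[ℂ] Matrix Q' Q' ℂ))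
    (Ψ : R × Q → ℂ) : ℝ :=
  entropy ρ - cohInfo (instrApplyRef E (pureState Ψ))

/-- The quantum disturbance (coherent information loss)
`δ(ρ,E) = S(ρ) - I_c^{R→Q'}((id_R ⊗ E)(Ψ))` of a channel. -/
def qDisturbanceChan [Fintype Q] [DecidableEq Q] [Fintype Q'] [DecidableEq Q']
    [Fintype R] [DecidableEq R]
    (ρ : Matrix Q Q ℂ) (E : Matrix Q Q ℂ →ₗ[ℂ] Matrix Q' Q' ℂ)
    (Ψ : R × Q → ℂ) : ℝ :=
  entropy ρ - cohInfo (idTensor E (pureState Ψ))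

/-- The quantum information gain `ι(ρ,M) = S(ρ^R) - ∑ₘ p(m) S(τ^R_m)`. -/
def qInfoGain [Fintype Q] [DecidableEq Q] [Fintype Q'] [DecidableEq Q']
    [Fintype R] [DecidableEq R] [Fintype O]
    (E : O → (Matrix Q Q ℂ →ₗ[ℂ] Matrix Q' Q' ℂ)) (Ψ : R × Q → ℂ) : ℝ :=
  entropy (ptraceRt (pureState Ψ)) -
    ∑ m, ((E m (ptraceL (pureState Ψ))).trace.re) *
      entropy ((((E m (ptraceL (pureState Ψ))).trace.re)⁻¹ : ℝ) •
        ptraceRt (idTensor (E m) (pureState Ψ)))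

/-- The corrected average output fidelity of an instrument on an ensemble:
`F_av(s,M) = sup over families of correcting channels {R_m} of
∑ₓ p(x) F(∑ₘ R_m(E_m(ρₓ)), ρₓ)`. -/
def avgFid [Fintype Q] [DecidableEq Q] [Fintype Q'] [Fintype X] [Fintype O]
    (p : X → ℝ) (ρ : X → Matrix Q Q ℂ)
    (E : O → (Matrix Q Q ℂ →ₗ[ℂ] Matrix Q' Q' ℂ)) : ℝ :=
  ⨆ Rf : {Rf : O → (Matrix Q' Q' ℂ →ₗ[ℂ] Matrix Q Q ℂ) // ∀ m, IsChannel (Rf m)},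
    ∑ x, p x * fidelity (∑ m, Rf.1 m (E m (ρ x))) (ρ x)

/-- The corrected average output fidelity of a channel on an ensemble:
`F_av(s,E) = sup over correcting channels R of ∑ₓ p(x) F(R(E(ρₓ)), ρₓ)`. -/
def avgFidChan [Fintype Q] [DecidableEq Q] [Fintype Q'] [Fintype X]
    (p : X → ℝ) (ρ : X → Matrix Q Q ℂ)
    (E : Matrix Q Q ℂ →ₗ[ℂ] Matrix Q' Q' ℂ) : ℝ :=
  ⨆ Rc : {Rc : Matrix Q' Q' ℂ →ₗ[ℂ] Matrix Q Q ℂ // IsChannel Rc},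
    ∑ x, p x * fidelity (Rc.1 (E (ρ x))) (ρ x)

/-- The corrected entanglement fidelity of an instrument w.r.t. a purification `Ψ`:
`F_e(ρ,M) = sup over families of correcting channels {R_m} of
F(∑ₘ (id_R ⊗ R_m ∘ E_m)(Ψ), Ψ)`. -/
def entFid [Fintype Q] [DecidableEq Q] [Fintype Q'] [Fintype R] [DecidableEq R] [Fintype O]
    (Ψ : R × Q → ℂ) (E : O → (Matrix Q Q ℂ →ₗ[ℂ] Matrix Q' Q' ℂ)) : ℝ :=
  ⨆ Rf : {Rf : O → (Matrix Q' Q' ℂ →ₗ[ℂ] Matrix Q Q ℂ) // ∀ m, IsChannel (Rf m)},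
    fidelity (∑ m, idTensor (Rf.1 m ∘ₗ E m) (pureState Ψ)) (pureState Ψ)

/-- A POVM: positive operators summing to the identity. -/
def IsPOVM [Fintype Q] [DecidableEq Q] [Fintype O] (P : O → Matrix Q Q ℂ) : Prop :=
  (∀ m, (P m).PosSemidef) ∧ ∑ m, P m = 1

/-- The classical mutual information `I(X:O)` of the joint distribution
`p(x,m) = p(x) Tr[ρₓ P_m]` generated by measuring the ensemble with the POVM `P`. -/
def povmMutualInfo [Fintype Q] [Fintype X] [Fintype O]
    (p : X → ℝ) (ρ : X → Matrix Q Q ℂ) (P : O → Matrix Q Q ℂ) : ℝ :=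
  ∑ x, ∑ m, p x * (ρ x * P m).trace.re *
    Real.logb 2 ((ρ x * P m).trace.re / (∑ x', p x' * (ρ x' * P m).trace.re))

/-- The accessible information: supremum of the mutual information over all POVMs. -/
def accInfo [Fintype Q] [DecidableEq Q] [Fintype X]
    (p : X → ℝ) (ρ : X → Matrix Q Q ℂ) : ℝ :=
  ⨆ k : ℕ, ⨆ P : {P : Fin k → Matrix Q Q ℂ // IsPOVM P}, povmMutualInfo p ρ P.1

/-- The minimum overlap `min_{1 ≤ i ≤ N-1} |⟨ψ_{x_i}|ψ_{x_{i+1}}⟩|` along a path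
`x : Fin N → X` of signals. -/
def pathMin [Fintype Q] (ψ : X → Q → ℂ) {N : ℕ} (x : Fin N → X) : ℝ :=
  ⨅ i : Fin (N - 1),
    ‖(star (ψ (x (Fin.castLE (Nat.sub_le N 1) i))) ⬝ᵥ
      ψ (x ⟨i.1 + 1, by have := i.isLt; omega⟩))‖

/-- `η(s)`: the supremum over all complete (surjective) paths of the minimum
consecutive overlap divided by the length of the path. -/
def eta [Fintype Q] (ψ : X → Q → ℂ) : ℝ :=
  ⨆ N : ℕ, ⨆ x : {x : Fin N → X // Function.Surjective x}, pathMin ψ x.1 / N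

/-- `ζ(s) = η(s) · minₓ p(x)`; the ensemble is irreducible iff `ζ(s) > 0`. -/
def zeta [Fintype Q] [Fintype X] (p : X → ℝ) (ψ : X → Q → ℂ) : ℝ :=
  eta ψ * ⨅ x, p x

/-- `Tr_R[(φ ⊗ 1_Q)|Ψ⟩⟨Ψ|]` for an operator `φ` on the reference system. -/
def refOp [Fintype R] (φ : Matrix R R ℂ) (Ψ : R × Q → ℂ) : Matrix Q Q ℂ :=
  fun a b => ∑ i, ∑ k, φ i k * Ψ (k, a) * star (Ψ (i, b))


/-! The outputs `M(ρ)` are block diagonal in the outcome register, so their entropy is the sum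
of the entropies of the blocks `E_m(ρ)`. Writing each block as its trace times a state, the
grouping rule `S(t σ) = t S(σ) - t log₂ t` splits off a Shannon term per outcome. Averaged over
the letters `x`, these Shannon terms assemble into `I(X:𝒳) = H(𝒳) - H(𝒳|X)`, and the remaining
terms into `∑ₘ p(m) χ(s̄ₘ)`. -/

theorem _root_.Matrix.IsHermitian.sum_eigenvalues_eq_of_charpoly_eq {n ι : Type*} [Fintype n]
    [DecidableEq n] [Fintype ι] {M : Matrix n n ℂ} (hM : M.IsHermitian) (d : ι → ℝ)
    (h : M.charpoly = ∏ i, (Polynomial.X - Polynomial.C (d i : ℂ))) (f : ℝ → ℝ) :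
    ∑ i, f (hM.eigenvalues i) = ∑ i, f (d i) := by
  have hroots : Finset.univ.val.map hM.eigenvalues = Finset.univ.val.map d := by
    have hc := hM.roots_charpoly_eq_eigenvalues
    rw [h, Polynomial.roots_prod _ _
      (Finset.prod_ne_zero_iff.mpr fun i _ => Polynomial.X_sub_C_ne_zero _)] at hc
    apply Multiset.map_injective Complex.ofReal_injective
    simpa [Multiset.map_map] using hc.symm
  simpa [Multiset.map_map] using congrArg (fun s => (s.map f).sum) hroots

theorem _root_.Matrix.charpoly_blockDiagonal {m o : Type*} [Fintype m] [DecidableEq m]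
    [Fintype o] [DecidableEq o] (F : o → Matrix m m ℂ) :
    (blockDiagonal F).charpoly = ∏ k, (F k).charpoly := by
  have hcharmatrix :
      charmatrix (blockDiagonal F) = blockDiagonal fun k => charmatrix (F k) := by
    refine Matrix.ext fun ⟨i, k⟩ ⟨j, k'⟩ => ?_
    by_cases hk : k = k'
    · subst hk; by_cases hij : i = j <;> simp [hij]
    · simp [blockDiagonal_apply_ne _ _ _ hk, hk]
  rw [charpoly, hcharmatrix, det_blockDiagonal]
  rfl

theorem _root_.Matrix.IsHermitian.charpoly_real_smul {n : Type*} [Fintype n] [DecidableEq n]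
    {M : Matrix n n ℂ} (hM : M.IsHermitian) (c : ℝ) :
    (c • M).charpoly = ∏ i, (Polynomial.X - Polynomial.C ((c * hM.eigenvalues i : ℝ) : ℂ)) := by
  conv_lhs => rw [hM.spectral_theorem, Unitary.conjStarAlgAut_apply, ← smul_mul_assoc,
    ← mul_smul_comm, charpoly_mul_comm, ← mul_assoc]
  rw [Unitary.coe_star_mul_self, one_mul, ← diagonal_smul, charpoly_diagonal]
  simp [Complex.real_smul]

theorem _root_.Matrix.IsHermitian.re_trace_eq_sum_eigenvalues {n : Type*} [Fintype n]
    [DecidableEq n] {M : Matrix n n ℂ} (hM : M.IsHermitian) :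
    M.trace.re = ∑ i, hM.eigenvalues i := by
  simp [hM.trace_eq_sum_eigenvalues]

theorem entropy_blockDiagonal {m o : Type*} [Fintype m] [DecidableEq m] [Fintype o]
    [DecidableEq o] {F : o → Matrix m m ℂ} (hF : ∀ k, (F k).IsHermitian) :
    entropy (blockDiagonal F) = ∑ k, entropy (F k) := by
  have hB : (blockDiagonal F).IsHermitian := by
    rw [IsHermitian, blockDiagonal_conjTranspose]
    exact congrArg blockDiagonal (funext fun k => (hF k).eq)
  have hchar : (blockDiagonal F).charpoly = ∏ x : m × o,
      (Polynomial.X - Polynomial.C ((hF x.2).eigenvalues x.1 : ℂ)) := by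
    rw [charpoly_blockDiagonal, Fintype.prod_prod_type_right]
    exact Finset.prod_congr rfl fun k _ => (hF k).charpoly_eq
  simp only [entropy, dif_pos hB, dif_pos (hF _),
    hB.sum_eigenvalues_eq_of_charpoly_eq _ hchar, Fintype.sum_prod_type_right, Finset.sum_div]

theorem entropy_real_smul {n : Type*} [Fintype n] [DecidableEq n] {M : Matrix n n ℂ}
    (hM : M.IsHermitian) (c : ℝ) :
    entropy (c • M) = c * entropy M + M.trace.re * Real.negMulLog c / Real.log 2 := by
  have hcM : (c • M).IsHermitian := hM.smul (IsSelfAdjoint.all c)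
  rw [entropy, entropy, dif_pos hcM, dif_pos hM,
    hcM.sum_eigenvalues_eq_of_charpoly_eq _ (hM.charpoly_real_smul c)]
  simp only [Real.negMulLog_mul, Finset.sum_add_distrib, hM.re_trace_eq_sum_eigenvalues,
    ← Finset.mul_sum, ← Finset.sum_mul]
  ring

theorem entropy_eq_trace_mul_entropy_inv_smul {n : Type*} [Fintype n] [DecidableEq n]
    {M : Matrix n n ℂ} (hM : M.PosSemidef) :
    entropy M = M.trace.re * entropy ((M.trace.re)⁻¹ • M)
      + Real.negMulLog M.trace.re / Real.log 2 := by
  set t := M.trace.re with ht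
  rcases eq_or_ne t 0 with h0 | h0
  · have hzero : M = 0 := by
      rw [← hM.trace_eq_zero_iff]
      exact Complex.ext h0 (by simp [hM.1.trace_eq_sum_eigenvalues])
    have hentropy_zero : entropy (0 : Matrix n n ℂ) = 0 := by
      simpa using entropy_real_smul isHermitian_zero 0
    rw [h0, hzero, hentropy_zero]
    simp
  · rw [entropy_real_smul hM.1, ← ht, Real.negMulLog, Real.negMulLog, Real.log_inv]
    field_simp
    ring

theorem IsCompletelyPositive.posSemidef_map {q q' : Type*} [Fintype q] [Fintype q']
    {Φ : Matrix q q ℂ →ₗ[ℂ] Matrix q' q' ℂ} (hΦ : IsCompletelyPositive Φ)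
    {σ : Matrix q q ℂ} (hσ : σ.PosSemidef) : (Φ σ).PosSemidef := by
  have h := hΦ 1 (σ.submatrix Prod.snd Prod.snd) (hσ.submatrix _)
  exact h.submatrix fun a => ((0 : Fin 1), a)

theorem mutualInfo_eq_entropy_sub_condEntropy {ι o : Type*} [Fintype ι] [Fintype o]
    (p : ι → ℝ) (pmx : ι → o → ℝ) (pm : o → ℝ) (hp : ∀ x, 0 ≤ p x)
    (hpmx : ∀ x m, 0 ≤ pmx x m) (hpm : ∀ m, pm m = ∑ x, p x * pmx x m) :
    ∑ x, ∑ m, p x * pmx x m * Real.logb 2 (pmx x m / pm m) =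
      (∑ m, Real.negMulLog (pm m) - ∑ x, p x * ∑ m, Real.negMulLog (pmx x m)) / Real.log 2 := by
  have hterm : ∀ x m, p x * pmx x m * Real.logb 2 (pmx x m / pm m) =
      (-(p x * Real.negMulLog (pmx x m)) - p x * pmx x m * Real.log (pm m)) / Real.log 2 := by
    intro x m
    rcases (mul_nonneg (hp x) (hpmx x m)).eq_or_lt with h0 | hpos
    · rcases mul_eq_zero.mp h0.symm with h | h <;> simp [h]
    · have hpm_pos : 0 < pm m := hpm m ▸ hpos.trans_le
        (Finset.single_le_sum (fun x _ => mul_nonneg (hp x) (hpmx x m)) (Finset.mem_univ x))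
      have hpmx_pos : 0 < pmx x m := pos_of_mul_pos_right hpos (hp x)
      rw [Real.logb, Real.log_div hpmx_pos.ne' hpm_pos.ne', Real.negMulLog]
      ring
  have hmarginal : ∀ m, Real.negMulLog (pm m) = -∑ x, p x * pmx x m * Real.log (pm m) := by
    intro m
    rw [Real.negMulLog, ← Finset.sum_mul, ← hpm]
    ring
  simp only [hterm, hmarginal, ← Finset.sum_div, Finset.sum_sub_distrib, Finset.mul_sum,
    Finset.sum_neg_distrib]
  rw [Finset.sum_comm (f := fun x m => p x * pmx x m * Real.log (pm m))]
  ring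

theorem instrApply_eq_blockDiagonal {q q' o : Type*} [DecidableEq o]
    (E : o → (Matrix q q ℂ →ₗ[ℂ] Matrix q' q' ℂ)) (σ : Matrix q q ℂ) :
    instrApply E σ = blockDiagonal fun m => E m σ :=
  rfl

theorem sum_smul_instrApply {q q' o ι : Type*} [Fintype ι] [DecidableEq o]
    (E : o → (Matrix q q ℂ →ₗ[ℂ] Matrix q' q' ℂ)) (c : ι → ℂ) (σ : ι → Matrix q q ℂ) :
    ∑ x, c x • instrApply E (σ x) = instrApply E (∑ x, c x • σ x) := by
  ext i j
  by_cases h : i.2 = j.2 <;> simp [instrApply, Matrix.sum_apply, h]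

theorem entropy_instrApply {q q' o : Type*} [Fintype q] [Fintype q'] [DecidableEq q']
    [Fintype o] [DecidableEq o] {E : o → (Matrix q q ℂ →ₗ[ℂ] Matrix q' q' ℂ)}
    (hE : ∀ m, IsCompletelyPositive (E m)) {σ : Matrix q q ℂ} (hσ : σ.PosSemidef) :
    entropy (instrApply E σ) =
      ∑ m, ((E m σ).trace.re * entropy ((E m σ).trace.re⁻¹ • E m σ)
        + Real.negMulLog (E m σ).trace.re / Real.log 2) := by
  rw [instrApply_eq_blockDiagonal,
    entropy_blockDiagonal fun m => ((hE m).posSemidef_map hσ).1]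
  exact Finset.sum_congr rfl fun m _ =>
    entropy_eq_trace_mul_entropy_inv_smul ((hE m).posSemidef_map hσ)

theorem entropyDefect_output_decomposition_general
    {Q Q' O X : Type*} [Fintype Q] [Fintype Q'] [DecidableEq Q']
    [Fintype O] [DecidableEq O] [Fintype X]
    (E : O → (Matrix Q Q ℂ →ₗ[ℂ] Matrix Q' Q' ℂ)) (hE : IsInstrument E)
    (p : X → ℝ) (ρ : X → Matrix Q Q ℂ)
    (hp : ∀ x, 0 < p x) (hρ : ∀ x, IsDensity (ρ x))
    (pmx : X → O → ℝ) (hpmx : ∀ x m, pmx x m = (E m (ρ x)).trace.re)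
    (pm : O → ℝ) (hpm : ∀ m, pm m = ∑ x, p x * pmx x m)
    (Iinfo : ℝ)
    (hI : Iinfo = ∑ x, ∑ m, p x * pmx x m * Real.logb 2 (pmx x m / pm m))
    (chiBar : O → ℝ)
    (hchi : ∀ m, chiBar m =
      entropy (((pm m)⁻¹ : ℝ) • E m (∑ x, (p x : ℂ) • ρ x)) -
        ∑ x, (p x * pmx x m / pm m) * entropy (((pmx x m)⁻¹ : ℝ) • E m (ρ x))) :
    entropyDefect p (fun x => instrApply E (ρ x)) =
      Iinfo + ∑ m, pm m * chiBar m := by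
  set ρs := ∑ x, (p x : ℂ) • ρ x
  have hρs : ρs.PosSemidef := posSemidef_sum _ fun x _ =>
    (hρ x).1.smul (by exact_mod_cast (hp x).le)
  have hpmx_nonneg : ∀ x m, 0 ≤ pmx x m := fun x m => by
    rw [hpmx]
    exact (Complex.nonneg_iff.mp ((hE.1 m).posSemidef_map (hρ x).1).trace_nonneg).1
  have htrace : ∀ m, (E m ρs).trace.re = pm m := fun m => by
    simp [ρs, map_sum, trace_sum, hpm, hpmx]
  -- an outcome with `p(m) = 0` has `p(x) p(m|x) = 0` for all `x`, so dividing by `0` is harmless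
  have hcancel : ∀ m x, pm m * (p x * pmx x m / pm m) = p x * pmx x m := fun m x => by
    rw [← mul_div_assoc]
    refine mul_div_cancel_left_of_imp fun h0 => ?_
    have hjoint : ∀ x ∈ Finset.univ, 0 ≤ p x * pmx x m :=
      fun x _ => mul_nonneg (hp x).le (hpmx_nonneg x m)
    exact (Finset.sum_eq_zero_iff_of_nonneg hjoint).mp ((hpm m).symm.trans h0) x (Finset.mem_univ x)
  rw [entropyDefect, sum_smul_instrApply, entropy_instrApply hE.1 hρs,
    hI, mutualInfo_eq_entropy_sub_condEntropy p pmx pm (fun x => (hp x).le) hpmx_nonneg hpm]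
  simp only [entropy_instrApply hE.1 (hρ _).1, htrace, ← hpmx, hchi, mul_sub, Finset.mul_sum,
    ← mul_assoc, hcancel, Finset.sum_add_distrib, Finset.sum_sub_distrib, mul_add]
  rw [Finset.sum_comm (f := fun m x => p x * pmx x m * entropy ((pmx x m)⁻¹ • E m (ρ x)))]
  simp only [mul_div_assoc', ← Finset.sum_div]
  ring

/-- The entropy defect of the ensemble output by the channelized
instrument decomposes as `χ(M(s)) = I(X:𝒳) + ∑ₘ p(m) χ(s̄ₘ)`. -/
theorem entropyDefect_output_decomposition
    {Q Q' O X : Type*} [Fintype Q] [DecidableEq Q] [Fintype Q'] [DecidableEq Q']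
    [Fintype O] [DecidableEq O] [Fintype X]
    (E : O → (Matrix Q Q ℂ →ₗ[ℂ] Matrix Q' Q' ℂ)) (hE : IsInstrument E)
    (p : X → ℝ) (ρ : X → Matrix Q Q ℂ)
    (hp : ∀ x, 0 < p x) (hp1 : (∑ x, p x) = 1) (hρ : ∀ x, IsDensity (ρ x))
    (pmx : X → O → ℝ) (hpmx : ∀ x m, pmx x m = (E m (ρ x)).trace.re)
    (pm : O → ℝ) (hpm : ∀ m, pm m = ∑ x, p x * pmx x m)
    (Iinfo : ℝ)
    (hI : Iinfo = ∑ x, ∑ m, p x * pmx x m * Real.logb 2 (pmx x m / pm m))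
    (chiBar : O → ℝ)
    (hchi : ∀ m, chiBar m =
      entropy (((pm m)⁻¹ : ℝ) • E m (∑ x, (p x : ℂ) • ρ x)) -
        ∑ x, (p x * pmx x m / pm m) * entropy (((pmx x m)⁻¹ : ℝ) • E m (ρ x))) :
    entropyDefect p (fun x => instrApply E (ρ x)) =
      Iinfo + ∑ m, pm m * chiBar m :=
  entropyDefect_output_decomposition_general E hE p ρ hp hρ pmx hpmx pm hpm Iinfo hI chiBar hchi

end QID
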